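/- Let f : Δ_{n-1} → ℝ with L-Lipschitz gradient, x* a stationary point, I^c = {i : λ_i(x*) > 0} ≠ ∅, δ_min = min_{i∈I^c} λ_i(x*), r* = δ_min/(δ_min + 2L). Suppose x_k ∈ Δ_{n-1} with ‖x_k − x*‖₁ < r*, J_k = {i ∈ I^c : (x_k)_i > 0} ≠ ∅, and δ_k = max_{i ∈ I∪J_k} λ_i(x*) where I = {i : λ_i(x*)=0}. Then: (i) λ_ĵ(x_k) > δ_k/2 for every ĵ ∈ argmax{λ_j(x*) : j ∈ J_k}; (ii) |λ_j(x_k)| < δ_k/2 for every j ∈ I; (iii) λ_j(x_k) > −δ_k/2 for every j ∈ I^c. Consequently max_{j ∈ S_k} λ_j(x_k) > max_j(−λ_j(x_k)) and the maximizer over S_k lies in J_k, so AFW performs an away step on a coordinate in J_k. -/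

import Mathlib

open RealInnerProductSpace

def probSimplex (n : ℕ) : Set (EuclideanSpace ℝ (Fin n)) :=
  {x | (∀ i, 0 ≤ x i) ∧ ∑ i, x i = 1}

noncomputable def stdVec {n : ℕ} (i : Fin n) : EuclideanSpace ℝ (Fin n) :=
  EuclideanSpace.single i 1

noncomputable def mult {n : ℕ} (G : EuclideanSpace ℝ (Fin n) → EuclideanSpace ℝ (Fin n))
    (x : EuclideanSpace ℝ (Fin n)) (i : Fin n) : ℝ :=
  ⟪G x, stdVec i - x⟫

/-!
Stationarity of `xs` makes every `λ_i(x*) = mult G xs i` nonnegative and forces `x*_i = 0` whenever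
`λ_i(x*) > 0`. Writing
`λ_i(x_k) - λ_i(x*) = ⟪G x_k - G x*, e_i - x_k⟫ - ⟪G x*, x_k - x*⟫`,
the first term is at most `L ‖x_k - x*‖₁`, and the second lies in `[0, δ_k ‖x_k - x*‖₁ / 2]`:
only coordinates with `x*_i = 0` contribute, and the positive part of `x_k - x*` has mass
`‖x_k - x*‖₁ / 2` because both points lie on the simplex. As `δ_min ≤ δ_k`, the radius
`δ_min / (δ_min + 2L)` makes `(L + δ_k / 2) ‖x_k - x*‖₁ < δ_k / 2`, so every `λ_i(x_k)` is within
`δ_k / 2` of `λ_i(x*) ∈ {0} ∪ [δ_min, ∞)`, and the maximum of `λ(x*)` over `J_k` is `δ_k` itself.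
-/

theorem sum_max_zero_eq_half_sum_abs {ι : Type*} [Fintype ι] (a : ι → ℝ) (h : ∑ i, a i = 0) :
    ∑ i, max (a i) 0 = (∑ i, |a i|) / 2 := by
  have h2 : ∀ i, max (a i) 0 = (a i + |a i|) / 2 := fun i => by
    rcases le_total 0 (a i) with h | h
    · rw [max_eq_left h, abs_of_nonneg h]; ring
    · rw [max_eq_right h, abs_of_nonpos h]; ring
  simp only [h2, ← Finset.sum_div, Finset.sum_add_distrib, h, zero_add]

theorem abs_inner_le_sum_abs {ι : Type*} [Fintype ι] {v w : EuclideanSpace ℝ ι}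
    (hw : ∀ j, |w j| ≤ 1) : |⟪v, w⟫| ≤ ∑ j, |v j| := by
  rw [PiLp.inner_apply]
  refine (Finset.abs_sum_le_sum_abs _ _).trans (Finset.sum_le_sum fun j _ => ?_)
  rw [RCLike.inner_apply, conj_trivial, abs_mul]
  exact mul_le_of_le_one_left (abs_nonneg _) (hw j)

theorem add_half_mul_lt_half {L δmin δ d : ℝ} (hL : 0 ≤ L) (hδmin : 0 < δmin) (hle : δmin ≤ δ)
    (hd : d < δmin / (δmin + 2 * L)) : (L + δ / 2) * d < δ / 2 := by
  have hden : 0 < δmin + 2 * L := by linarith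
  calc (L + δ / 2) * d < (L + δ / 2) * (δmin / (δmin + 2 * L)) := by gcongr; linarith
    _ ≤ δ / 2 := by
      rw [mul_div_assoc', div_le_iff₀ hden]
      nlinarith

section

variable {n : ℕ} (G : EuclideanSpace ℝ (Fin n) → EuclideanSpace ℝ (Fin n))

theorem mult_eq_sub_sum (x : EuclideanSpace ℝ (Fin n)) (i : Fin n) :
    mult G x i = G x i - ∑ j, G x j * x j := by
  simp [mult, stdVec, inner_sub_right, PiLp.inner_apply, mul_comm]

theorem stdVec_mem_probSimplex (i : Fin n) : stdVec i ∈ probSimplex n := by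
  refine ⟨fun j => ?_, ?_⟩ <;> simp [stdVec, apply_ite]

theorem abs_stdVec_sub_apply_le_one {y : EuclideanSpace ℝ (Fin n)} (hy : y ∈ probSimplex n)
    (i j : Fin n) : |(stdVec i - y) j| ≤ 1 := by
  have hyj : y j ≤ 1 := hy.2 ▸ Finset.single_le_sum (fun k _ => hy.1 k) (Finset.mem_univ j)
  rw [abs_le]
  simp only [stdVec, PiLp.sub_apply, PiLp.single_apply]
  constructor <;> split_ifs <;> linarith [hy.1 j]

theorem mult_sub_mult (x y : EuclideanSpace ℝ (Fin n)) (i : Fin n) :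
    mult G y i - mult G x i = ⟪G y - G x, stdVec i - y⟫ - ⟪G x, y - x⟫ := by
  simp only [mult, inner_sub_left, inner_sub_right]
  ring

theorem inner_sub_eq_sum_mul_mult {x y : EuclideanSpace ℝ (Fin n)} (h : ∑ j, y j = ∑ j, x j) :
    ⟪G x, y - x⟫ = ∑ j, (y j - x j) * mult G x j := by
  simp only [mult_eq_sub_sum, mul_sub, Finset.sum_sub_distrib, ← Finset.sum_mul, h, sub_self,
    sub_zero, inner_sub_right, PiLp.inner_apply, RCLike.inner_apply, conj_trivial, sub_mul]

theorem sum_mul_mult_eq_zero {x : EuclideanSpace ℝ (Fin n)} (hx : ∑ j, x j = 1) :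
    ∑ j, x j * mult G x j = 0 := by
  simp only [mult_eq_sub_sum, mul_sub, Finset.sum_sub_distrib, ← Finset.sum_mul, hx, one_mul]
  exact sub_eq_zero.2 (Finset.sum_congr rfl fun j _ => mul_comm _ _)

theorem mult_nonneg_of_stationary {x : EuclideanSpace ℝ (Fin n)}
    (hstat : ∀ y ∈ probSimplex n, 0 ≤ ⟪G x, y - x⟫) (i : Fin n) : 0 ≤ mult G x i :=
  hstat _ (stdVec_mem_probSimplex i)

theorem apply_eq_zero_of_mult_pos {x : EuclideanSpace ℝ (Fin n)} (hx : x ∈ probSimplex n)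
    (hstat : ∀ y ∈ probSimplex n, 0 ≤ ⟪G x, y - x⟫) {j : Fin n} (hj : 0 < mult G x j) :
    x j = 0 := by
  have hterm : x j * mult G x j = 0 :=
    (Finset.sum_eq_zero_iff_of_nonneg (s := Finset.univ)
      (fun i _ => mul_nonneg (hx.1 i) (mult_nonneg_of_stationary G hstat i))).1
      (sum_mul_mult_eq_zero G hx.2) j (Finset.mem_univ j)
  exact (mul_eq_zero.1 hterm).resolve_right hj.ne'

theorem inner_sub_le_of_stationary {x y : EuclideanSpace ℝ (Fin n)} (hx : x ∈ probSimplex n)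
    (hstat : ∀ y ∈ probSimplex n, 0 ≤ ⟪G x, y - x⟫) (hy : y ∈ probSimplex n) {δ : ℝ}
    (hδ0 : 0 ≤ δ) (hδ : ∀ j, 0 < y j → 0 < mult G x j → mult G x j ≤ δ) :
    ⟪G x, y - x⟫ ≤ δ * ((∑ j, |y j - x j|) / 2) := by
  have hsum : ∑ j, (y j - x j) = 0 := by rw [Finset.sum_sub_distrib, hx.2, hy.2, sub_self]
  rw [inner_sub_eq_sum_mul_mult G (hy.2.trans hx.2.symm),
    ← sum_max_zero_eq_half_sum_abs _ hsum, Finset.mul_sum]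
  refine Finset.sum_le_sum fun j _ => ?_
  rcases (mult_nonneg_of_stationary G hstat j).eq_or_lt with h | h
  · rw [← h, mul_zero]
    exact mul_nonneg hδ0 (le_max_right _ _)
  · rw [apply_eq_zero_of_mult_pos G hx hstat h, sub_zero, max_eq_left (hy.1 j), mul_comm]
    rcases (hy.1 j).eq_or_lt with hy0 | hy0
    · rw [← hy0, mul_zero, mul_zero]
    · exact mul_le_mul_of_nonneg_right (hδ j hy0 h) hy0.le

theorem abs_mult_sub_mult_le {x y : EuclideanSpace ℝ (Fin n)} (hx : x ∈ probSimplex n)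
    (hstat : ∀ y ∈ probSimplex n, 0 ≤ ⟪G x, y - x⟫) (hy : y ∈ probSimplex n) {δ L : ℝ}
    (hδ0 : 0 ≤ δ) (hδ : ∀ j, 0 < y j → 0 < mult G x j → mult G x j ≤ δ)
    (hL : ∑ j, |G y j - G x j| ≤ L * ∑ j, |y j - x j|) (i : Fin n) :
    |mult G y i - mult G x i| ≤ (L + δ / 2) * ∑ j, |y j - x j| := by
  have hA : |⟪G y - G x, stdVec i - y⟫| ≤ L * ∑ j, |y j - x j| :=
    (abs_inner_le_sum_abs (abs_stdVec_sub_apply_le_one hy i)).trans (by simpa using hL)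
  obtain ⟨hA₁, hA₂⟩ := abs_le.1 hA
  have hB₁ := hstat y hy
  have hB₂ := inner_sub_le_of_stationary G hx hstat hy hδ0 hδ
  rw [mult_sub_mult, abs_le]
  constructor <;> linarith

end

theorem eq_of_isGreatest_of_forall_le {ι : Type*} {a x : ι → ℝ} {δ : ℝ} {j : ι}
    (hδ : IsGreatest {v | ∃ i, (a i = 0 ∨ (0 < a i ∧ 0 < x i)) ∧ v = a i} δ) (hpos : 0 < δ)
    (hj : 0 < a j ∧ 0 < x j) (hmax : ∀ i, 0 < a i ∧ 0 < x i → a i ≤ a j) : a j = δ := by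
  refine le_antisymm (hδ.2 ⟨j, Or.inr hj, rfl⟩) ?_
  obtain ⟨i, hi | hi, rfl⟩ := hδ.1
  · exact absurd hi hpos.ne'
  · exact hmax i hi

theorem exists_away_step {ι : Type*} [Fintype ι] {a b x : ι → ℝ} {δ : ℝ} (ha : ∀ i, 0 ≤ a i)
    (hJ : ∃ i, 0 < a i ∧ 0 < x i)
    (hJmax : ∀ j, 0 < a j ∧ 0 < x j → (∀ i, 0 < a i ∧ 0 < x i → a i ≤ a j) → δ / 2 < b j)
    (hI : ∀ j, a j = 0 → |b j| < δ / 2) (hIc : ∀ j, 0 < a j → -(δ / 2) < b j) :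
    ∃ jhat, 0 < x jhat ∧ 0 < a jhat ∧ (∀ j, 0 < x j → b j ≤ b jhat) ∧ ∀ j, -b j < b jhat := by
  classical
  obtain ⟨j₀, hj₀⟩ := hJ
  obtain ⟨j₁, hj₁, hj₁max⟩ := (Finset.univ.filter fun j => 0 < a j ∧ 0 < x j).exists_max_image a
    ⟨j₀, by simpa using hj₀⟩
  simp only [Finset.mem_filter, Finset.mem_univ, true_and] at hj₁ hj₁max
  obtain ⟨jhat, hjhat, hjhat_max⟩ := (Finset.univ.filter fun j => 0 < x j).exists_max_image b
    ⟨j₁, by simpa using hj₁.2⟩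
  simp only [Finset.mem_filter, Finset.mem_univ, true_and] at hjhat hjhat_max
  have hbig : δ / 2 < b jhat := (hJmax j₁ hj₁ hj₁max).trans_le (hjhat_max j₁ hj₁.2)
  refine ⟨jhat, hjhat, ?_, hjhat_max, fun j => ?_⟩
  · refine (ha jhat).lt_of_ne fun h => ?_
    linarith [le_abs_self (b jhat), hI jhat h.symm]
  · rcases (ha j).eq_or_lt with h | h
    · linarith [neg_le_abs (b j), hI j h.symm]
    · linarith [hIc j h]

theorem afw_local_identification_general {n : ℕ}
    (G : EuclideanSpace ℝ (Fin n) → EuclideanSpace ℝ (Fin n))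
    (L : ℝ) (hLpos : 0 < L)
    (hL : ∀ x y, (∑ i, |G x i - G y i|) ≤ L * ∑ i, |x i - y i|)
    (xs : EuclideanSpace ℝ (Fin n)) (hxs : xs ∈ probSimplex n)
    (hstat : ∀ y ∈ probSimplex n, 0 ≤ ⟪G xs, y - xs⟫)
    (δmin : ℝ) (hδmin : IsLeast {v | ∃ i, 0 < mult G xs i ∧ v = mult G xs i} δmin)
    (xk : EuclideanSpace ℝ (Fin n)) (hxk : xk ∈ probSimplex n)
    (hdist : (∑ i, |xk i - xs i|) < δmin / (δmin + 2 * L))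
    (hJ : ∃ i, 0 < mult G xs i ∧ 0 < xk i)
    (δk : ℝ)
    (hδk : IsGreatest
      {v | ∃ i, (mult G xs i = 0 ∨ (0 < mult G xs i ∧ 0 < xk i)) ∧ v = mult G xs i} δk) :
    (∀ jhat, (0 < mult G xs jhat ∧ 0 < xk jhat) →
        (∀ j, 0 < mult G xs j ∧ 0 < xk j → mult G xs j ≤ mult G xs jhat) →
        δk / 2 < mult G xk jhat) ∧
    (∀ j, mult G xs j = 0 → |mult G xk j| < δk / 2) ∧
    (∀ j, 0 < mult G xs j → -(δk / 2) < mult G xk j) ∧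
    (∃ jhat, 0 < xk jhat ∧ 0 < mult G xs jhat ∧
        (∀ j, 0 < xk j → mult G xk j ≤ mult G xk jhat) ∧
        (∀ j, -mult G xk j < mult G xk jhat)) := by
  have hm := mult_nonneg_of_stationary G hstat
  have hδmin_pos : 0 < δmin := by
    obtain ⟨i, hi, rfl⟩ := hδmin.1
    exact hi
  have hδmin_le : δmin ≤ δk := by
    obtain ⟨j, hj⟩ := hJ
    exact (hδmin.2 ⟨j, hj.1, rfl⟩).trans (hδk.2 ⟨j, Or.inr hj, rfl⟩)
  have hclose : ∀ i, |mult G xk i - mult G xs i| < δk / 2 := fun i =>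
    (abs_mult_sub_mult_le G hxs hstat hxk (by linarith)
      (fun j hj hmj => hδk.2 ⟨j, Or.inr ⟨hmj, hj⟩, rfl⟩) (hL xk xs) i).trans_lt
      (add_half_mul_lt_half hLpos.le hδmin_pos hδmin_le hdist)
  have hJmax : ∀ jhat, (0 < mult G xs jhat ∧ 0 < xk jhat) →
      (∀ j, 0 < mult G xs j ∧ 0 < xk j → mult G xs j ≤ mult G xs jhat) →
      δk / 2 < mult G xk jhat := fun jhat hjhat hmax => by
    have hδk_eq := eq_of_isGreatest_of_forall_le hδk (by linarith) hjhat hmax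
    linarith [(abs_lt.1 (hclose jhat)).1]
  have hI : ∀ j, mult G xs j = 0 → |mult G xk j| < δk / 2 := fun j hj => by
    simpa [hj] using hclose j
  have hIc : ∀ j, 0 < mult G xs j → -(δk / 2) < mult G xk j := fun j hj => by
    linarith [(abs_lt.1 (hclose j)).1]
  exact ⟨hJmax, hI, hIc, exists_away_step hm hJ hJmax hI hIc⟩

/-- Local identification: if `‖x_k − x*‖₁ < r* = δ_min/(δ_min + 2L)` and
`J_k = {i ∈ I^c : (x_k)_i > 0} ≠ ∅`, with `δ_k = max_{i ∈ I ∪ J_k} λ_i(x*)`, then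
(i) `λ_jhat(x_k) > δ_k/2` for maximizers `jhat` of `λ_·(x*)` over `J_k`;
(ii) `|λ_j(x_k)| < δ_k/2` for `j ∈ I`;
(iii) `λ_j(x_k) > −δ_k/2` for `j ∈ I^c`;
and consequently the AFW performs an away step on a coordinate in `J_k`:
there is `jhat ∈ J_k` maximizing `λ_·(x_k)` over the support of `x_k` with
`λ_jhat(x_k) > max_j(−λ_j(x_k))`. -/
theorem afw_local_identification {n : ℕ}
    (f : EuclideanSpace ℝ (Fin n) → ℝ)
    (G : EuclideanSpace ℝ (Fin n) → EuclideanSpace ℝ (Fin n))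
    (hG : ∀ x, HasGradientAt f (G x) x) (L : ℝ) (hLpos : 0 < L)
    (hL : ∀ x y, (∑ i, |G x i - G y i|) ≤ L * ∑ i, |x i - y i|)
    (xs : EuclideanSpace ℝ (Fin n)) (hxs : xs ∈ probSimplex n)
    (hstat : ∀ y ∈ probSimplex n, 0 ≤ ⟪G xs, y - xs⟫)
    (hIc : ∃ i, 0 < mult G xs i)
    (δmin : ℝ) (hδmin : IsLeast {v | ∃ i, 0 < mult G xs i ∧ v = mult G xs i} δmin)
    (xk : EuclideanSpace ℝ (Fin n)) (hxk : xk ∈ probSimplex n)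
    (hdist : (∑ i, |xk i - xs i|) < δmin / (δmin + 2 * L))
    (hJ : ∃ i, 0 < mult G xs i ∧ 0 < xk i)
    (δk : ℝ)
    (hδk : IsGreatest
      {v | ∃ i, (mult G xs i = 0 ∨ (0 < mult G xs i ∧ 0 < xk i)) ∧ v = mult G xs i} δk) :
    (∀ jhat, (0 < mult G xs jhat ∧ 0 < xk jhat) →
        (∀ j, 0 < mult G xs j ∧ 0 < xk j → mult G xs j ≤ mult G xs jhat) →
        δk / 2 < mult G xk jhat) ∧
    (∀ j, mult G xs j = 0 → |mult G xk j| < δk / 2) ∧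
    (∀ j, 0 < mult G xs j → -(δk / 2) < mult G xk j) ∧
    (∃ jhat, 0 < xk jhat ∧ 0 < mult G xs jhat ∧
        (∀ j, 0 < xk j → mult G xk j ≤ mult G xk jhat) ∧
        (∀ j, -mult G xk j < mult G xk jhat)) :=
  afw_local_identification_general G L hLpos hL xs hxs hstat δmin hδmin xk hxk hdist hJ δk hδk
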